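/- Let D be a Steiner 2-design S(2,k,v) that contains a parallel class (a set of v/k pairwise disjoint blocks partitioning the point set), and let G_1 be its 1-block intersection graph, which is r-regular with r = k(v-k)/(k-1). If G_1 admits a silver coloring with respect to some maximum independent set, then k^2 divides v. -/

import Mathlib

open Finset

variable {α : Type*}

/-- A Steiner 2-design `S(2,k,v)`: the point set has `v` points, every block has
`k` points, and every pair of distinct points lies in exactly one block. -/
def IsSteiner [Fintype α] [DecidableEq α] (v k : ℕ) (B : Finset (Finset α)) : Prop :=
  Fintype.card α = v ∧ (∀ b ∈ B, b.card = k) ∧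
    ∀ x y : α, x ≠ y → (B.filter fun b => x ∈ b ∧ y ∈ b).card = 1

/-- The `i`-block intersection graph: vertices are the blocks of `B`, two blocks
adjacent iff they intersect in exactly `i` points. -/
def BIG [DecidableEq α] (i : ℕ) (B : Finset (Finset α)) :
    SimpleGraph {b : Finset α // b ∈ B} where
  Adj b₁ b₂ := b₁ ≠ b₂ ∧ ((b₁ : Finset α) ∩ (b₂ : Finset α)).card = i
  symm := ⟨fun a b ⟨h1, h2⟩ => ⟨h1.symm, by rwa [Finset.inter_comm]⟩⟩
  loopless := ⟨fun a ⟨h, _⟩ => h rfl⟩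

instance [DecidableEq α] (i : ℕ) (B : Finset (Finset α)) :
    DecidableRel (BIG (α := α) i B).Adj := fun _ _ => inferInstanceAs (Decidable (_ ∧ _))

/-- `I` is a maximum independent set of `G`. -/
def IsMaxIndep {V : Type*} (G : SimpleGraph V) (I : Finset V) : Prop :=
  (∀ a ∈ I, ∀ b ∈ I, ¬ G.Adj a b) ∧
    ∀ J : Finset V, (∀ a ∈ J, ∀ b ∈ J, ¬ G.Adj a b) → J.card ≤ I.card

/-- A silver coloring of the `r`-regular graph `G` with respect to `I`: a proper
`(r+1)`-coloring under which every vertex of `I` is rainbow (all `r+1` colors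
appear on its closed neighborhood). -/
def SilverWith {V : Type*} (G : SimpleGraph V) (r : ℕ) (I : Finset V) : Prop :=
  ∃ c : V → Fin (r + 1), (∀ a b, G.Adj a b → c a ≠ c b) ∧
    ∀ x ∈ I, ∀ col : Fin (r + 1), ∃ y, (y = x ∨ G.Adj x y) ∧ c y = col

/-- `G` is silver: some silver coloring exists with respect to some maximum
independent set. -/
def IsSilver {V : Type*} (G : SimpleGraph V) (r : ℕ) : Prop :=
  ∃ I : Finset V, IsMaxIndep G I ∧ SilverWith G r I

/-- A parallel class: pairwise disjoint blocks of `B` covering every point. -/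
def IsParallelClass [DecidableEq α] (B P : Finset (Finset α)) : Prop :=
  P ⊆ B ∧ (∀ b₁ ∈ P, ∀ b₂ ∈ P, b₁ ≠ b₂ → b₁ ∩ b₂ = ∅) ∧ ∀ x : α, ∃ b ∈ P, x ∈ b

/-!
Any maximum independent set `I` of the 1-block intersection graph has the size `v / k` of a
parallel class, so its blocks partition the points; consequently every block outside `I` meets
exactly `k` blocks of `I`, each in one point. In a silver colouring, the closed neighbourhood of a
block of `I` has `r + 1` vertices and shows all `r + 1` colours, hence each colour exactly once.
Counting, for a fixed colour, the pairs (block `x ∈ I`, block of that colour in the closed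
neighbourhood of `x`) from both sides gives `|I| = |I_col| + k · (number of blocks of that colour
outside I)`, so every colour class of `I` is congruent to `|I|` modulo `k`. If `k ∤ |I|`, every one
of the `r + 1 > |I|` colours would occur in `I`, which is absurd. Hence `k ∣ v / k`.
-/

theorem le_mul_sub_div_sub_one {m k : ℕ} (hm : 1 < m) (hk : 1 < k) :
    m ≤ k * (m * k - k) / (k - 1) := by
  rw [Nat.le_div_iff_mul_le (by omega)]
  obtain ⟨a, rfl⟩ := Nat.exists_eq_add_of_le hm
  obtain ⟨b, rfl⟩ := Nat.exists_eq_add_of_le hk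
  have : (2 + a) * (2 + b) - (2 + b) = (1 + a) * (2 + b) := by
    rw [Nat.sub_eq_of_eq_add]; ring
  rw [this, show 2 + b - 1 = 1 + b by omega]
  nlinarith

theorem card_filter_card_inter_eq_one {ι : Type*} [DecidableEq α] (F : Finset ι)
    (f : ι → Finset α) (z : Finset α) (hcover : ∀ p ∈ z, #(F.filter (p ∈ f ·)) = 1)
    (hle : ∀ i ∈ F, #(z ∩ f i) ≤ 1) :
    #(F.filter fun i => #(z ∩ f i) = 1) = #z := by
  calc #(F.filter fun i => #(z ∩ f i) = 1) = ∑ i ∈ F, #(z ∩ f i) := by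
        rw [card_filter]
        refine sum_congr rfl fun i hi => ?_
        have := hle i hi
        split_ifs <;> omega
    _ = ∑ p ∈ z, #(F.filter (p ∈ f ·)) := by
        simpa only [bipartiteAbove, bipartiteBelow, filter_mem_eq_inter] using
          sum_card_bipartiteAbove_eq_sum_card_bipartiteBelow (s := F) (t := z)
            (fun i p => p ∈ f i)
    _ = #z := by rw [sum_congr rfl hcover, card_eq_sum_ones]

theorem dvd_card_of_card_fiber_modEq {V β : Type*} [Fintype β] [DecidableEq β] {s : Finset V}
    {k : ℕ} (c : V → β) (h : ∀ b, #(s.filter (c · = b)) ≡ #s [MOD k])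
    (hs : #s < Fintype.card β) : k ∣ #s := by
  by_contra hk
  have hsurj : Set.SurjOn c s (univ : Finset β) := fun b _ => by
    obtain ⟨y, hy⟩ : (s.filter (c · = b)).Nonempty := by
      rw [← card_pos, Nat.pos_iff_ne_zero]
      intro h0
      exact hk (Nat.modEq_zero_iff_dvd.1 (h0 ▸ h b).symm)
    rw [mem_filter] at hy
    exact ⟨y, hy.1, hy.2⟩
  have := card_le_card_of_surjOn c hsurj
  rw [card_univ] at this
  omega

namespace SimpleGraph

variable {V : Type*} [Fintype V] [DecidableEq V] {G : SimpleGraph V} [DecidableRel G.Adj]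
  {r k : ℕ} {I : Finset V}

theorem IsRegularOfDegree.existsUnique_of_rainbow (hreg : G.IsRegularOfDegree r)
    {c : V → Fin (r + 1)} {x : V} (hx : ∀ col, ∃ y, (y = x ∨ G.Adj x y) ∧ c y = col)
    (col : Fin (r + 1)) : ∃! y, (y = x ∨ G.Adj x y) ∧ c y = col := by
  have hmem : ∀ y, y ∈ insert x (G.neighborFinset x) ↔ y = x ∨ G.Adj x y := by
    simp [mem_neighborFinset]
  have hinj : Set.InjOn c (insert x (G.neighborFinset x) : Finset V) := by
    refine injOn_of_surjOn_of_card_le c (t := univ) (fun _ _ => mem_coe.2 (mem_univ _))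
      (fun col _ => ?_) ?_
    · obtain ⟨y, hy, rfl⟩ := hx col
      exact ⟨y, mem_coe.2 ((hmem y).2 hy), rfl⟩
    · rw [card_insert_of_notMem (by simp), card_neighborFinset_eq_degree, hreg x, card_univ,
        Fintype.card_fin]
  obtain ⟨y, hy, hcy⟩ := hx col
  refine ⟨y, ⟨hy, hcy⟩, fun z ⟨hz, hcz⟩ => hinj ?_ ?_ (hcz.trans hcy.symm)⟩
  · exact mem_coe.2 ((hmem z).2 hz)
  · exact mem_coe.2 ((hmem y).2 hy)

/-- Double counting the pairs `(x, z)` with `x ∈ I` and `z` of colour `col` in the closed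
neighbourhood of `x`: each `x` sees exactly one such `z`, while each `z ∈ I` is seen once and
each `z ∉ I` is seen `k` times. -/
theorem card_filter_color_modEq (hreg : G.IsRegularOfDegree r)
    (hI : ∀ a ∈ I, ∀ b ∈ I, ¬ G.Adj a b) (hout : ∀ z ∉ I, #(I.filter (G.Adj z)) = k)
    {c : V → Fin (r + 1)} (hrainbow : ∀ x ∈ I, ∀ col, ∃ y, (y = x ∨ G.Adj x y) ∧ c y = col)
    (col : Fin (r + 1)) : #(I.filter (c · = col)) ≡ #I [MOD k] := by
  set t := univ.filter (c · = col)
  have hdc := sum_card_bipartiteAbove_eq_sum_card_bipartiteBelow (s := I) (t := t)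
    (fun x z => z = x ∨ G.Adj x z)
  have hseen : ∀ x ∈ I, #(t.bipartiteAbove (fun x z => z = x ∨ G.Adj x z) x) = 1 := by
    intro x hx
    rw [card_eq_one_iff_existsUnique]
    simpa [bipartiteAbove, t, and_comm] using hreg.existsUnique_of_rainbow (hrainbow x hx) col
  have hin : ∀ z ∈ t.filter (· ∈ I),
      #(I.bipartiteBelow (fun x z => z = x ∨ G.Adj x z) z) = 1 := by
    intro z hz
    rw [mem_filter] at hz
    rw [card_eq_one]
    refine ⟨z, eq_singleton_iff_unique_mem.2 ⟨by simp [bipartiteBelow, hz.2], fun x hx => ?_⟩⟩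
    simp only [bipartiteBelow, mem_filter] at hx
    exact hx.2.resolve_right (hI x hx.1 z hz.2) |>.symm
  have hnotin : ∀ z ∈ t.filter (· ∉ I),
      #(I.bipartiteBelow (fun x z => z = x ∨ G.Adj x z) z) = k := by
    intro z hz
    rw [mem_filter] at hz
    rw [← hout z hz.2, bipartiteBelow]
    congr 1
    refine filter_congr fun x hx => ?_
    have : z ≠ x := fun h => hz.2 (h ▸ hx)
    simp [this, G.adj_comm]
  rw [sum_congr rfl hseen, ← sum_filter_add_sum_filter_not t (· ∈ I), sum_congr rfl hin,
    sum_congr rfl hnotin] at hdc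
  have hcol : t.filter (· ∈ I) = I.filter (c · = col) := by
    ext z
    simp [t, and_comm]
  simp only [sum_const, smul_eq_mul, mul_one, hcol] at hdc
  rw [Nat.ModEq, hdc, Nat.add_mul_mod_self_right]

theorem _root_.SilverWith.dvd_card (h : SilverWith G r I) (hreg : G.IsRegularOfDegree r)
    (hI : ∀ a ∈ I, ∀ b ∈ I, ¬ G.Adj a b) (hout : ∀ z ∉ I, #(I.filter (G.Adj z)) = k)
    (hIr : #I ≤ r) : k ∣ #I := by
  obtain ⟨c, -, hrainbow⟩ := h
  refine dvd_card_of_card_fiber_modEq c (card_filter_color_modEq hreg hI hout hrainbow) ?_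
  rw [Fintype.card_fin]
  omega

end SimpleGraph

theorem BIG_adj [DecidableEq α] {i : ℕ} {B : Finset (Finset α)} {x y : {b // b ∈ B}} :
    (BIG i B).Adj x y ↔ x ≠ y ∧ #(x.1 ∩ y.1) = i :=
  Iff.rfl

namespace IsSteiner

variable [Fintype α] [DecidableEq α] {v k : ℕ} {B : Finset (Finset α)}

theorem card_inter_le_one (hD : IsSteiner v k B) {b₁ b₂ : Finset α} (h₁ : b₁ ∈ B)
    (h₂ : b₂ ∈ B) (hne : b₁ ≠ b₂) : #(b₁ ∩ b₂) ≤ 1 := by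
  by_contra! h
  obtain ⟨x, hx, y, hy, hxy⟩ := one_lt_card.1 h
  rw [mem_inter] at hx hy
  have hsub : {b₁, b₂} ⊆ B.filter fun b => x ∈ b ∧ y ∈ b := by
    intro b hb
    rcases mem_insert.1 hb with rfl | hb
    · exact mem_filter.2 ⟨h₁, hx.1, hy.1⟩
    · rw [mem_singleton.1 hb]
      exact mem_filter.2 ⟨h₂, hx.2, hy.2⟩
  have := card_le_card hsub
  rw [hD.2.2 x y hxy, card_pair hne] at this
  omega

theorem card_filter_mem_card_inter_eq_one (hD : IsSteiner v k B) {b : Finset α} (hb : b ∈ B)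
    {q : α} (hq : q ∉ b) : #(B.filter fun y => q ∈ y ∧ #(b ∩ y) = 1) = k := by
  have hcover : ∀ p ∈ b, #((B.filter (q ∈ ·)).filter (p ∈ id ·)) = 1 := by
    intro p hp
    rw [filter_filter, ← hD.2.2 p q (fun h => hq (h ▸ hp))]
    simp only [id, and_comm]
  have hle : ∀ y ∈ B.filter (q ∈ ·), #(b ∩ id y) ≤ 1 := by
    intro y hy
    rw [mem_filter] at hy
    exact hD.card_inter_le_one hb hy.1 fun h => hq (h ▸ hy.2)
  rw [← hD.2.1 b hb, ← card_filter_card_inter_eq_one _ id b hcover hle, filter_filter]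
  rfl

/-- Double counting the flags `(y, q)` with `y` a neighbour of `b` and `q ∈ y \ b`. -/
theorem card_neighbors_mul (hD : IsSteiner v k B) {b : Finset α} (hb : b ∈ B) :
    #(B.filter fun y => b ≠ y ∧ #(b ∩ y) = 1) * (k - 1) = (v - k) * k := by
  have := card_mul_eq_card_mul (s := B.filter fun y => b ≠ y ∧ #(b ∩ y) = 1) (t := bᶜ)
    (r := fun y q => q ∈ y) (m := k - 1) (n := k) ?_ ?_
  · rwa [card_compl, hD.1, hD.2.1 b hb] at this
  · intro y hy
    rw [mem_filter] at hy
    rw [bipartiteAbove, filter_mem_eq_inter, inter_comm, ← sdiff_eq_inter_compl, card_sdiff,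
      hy.2.2, hD.2.1 y hy.1]
  · intro q hq
    rw [mem_compl] at hq
    rw [bipartiteBelow, filter_filter, ← hD.card_filter_mem_card_inter_eq_one hb hq]
    congr 1
    exact filter_congr fun y _ => ⟨fun h => ⟨h.2, h.1.2⟩,
      fun h => ⟨⟨fun hby => hq (hby ▸ h.1), h.2⟩, h.1⟩⟩

theorem isRegularOfDegree_BIG (hD : IsSteiner v k B) (hk : 1 < k) :
    (BIG 1 B).IsRegularOfDegree (k * (v - k) / (k - 1)) := by
  intro x
  have hdeg : (BIG 1 B).degree x = #(B.filter fun y => x.1 ≠ y ∧ #(x.1 ∩ y) = 1) := by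
    rw [← SimpleGraph.card_neighborFinset_eq_degree, SimpleGraph.neighborFinset_eq_filter,
      ← card_map (Function.Embedding.subtype _)]
    congr 1
    ext y
    simp only [mem_map, mem_filter, mem_univ, true_and, Function.Embedding.coe_subtype, BIG_adj,
      ← Subtype.coe_ne_coe]
    exact ⟨fun ⟨y, h, hy⟩ => hy ▸ ⟨y.2, h⟩, fun ⟨hy, h⟩ => ⟨⟨y, hy⟩, h, rfl⟩⟩
  rw [hdeg, mul_comm k, eq_comm]
  exact Nat.div_eq_of_eq_mul_left (by omega) (hD.card_neighbors_mul x.2).symm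

theorem disjoint_of_not_adj (hD : IsSteiner v k B) {x y : {b // b ∈ B}} (hne : x ≠ y)
    (h : ¬ (BIG 1 B).Adj x y) : Disjoint x.1 y.1 := by
  rw [disjoint_iff_inter_eq_empty, ← card_eq_zero]
  have := hD.card_inter_le_one x.2 y.2 (Subtype.coe_ne_coe.2 hne)
  have : #(x.1 ∩ y.1) ≠ 1 := fun h₁ => h ⟨hne, h₁⟩
  omega

theorem card_biUnion_of_indep (hD : IsSteiner v k B) {J : Finset {b // b ∈ B}}
    (hJ : ∀ a ∈ J, ∀ b ∈ J, ¬ (BIG 1 B).Adj a b) : #(J.biUnion Subtype.val) = #J * k := by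
  rw [card_biUnion fun x hx y hy hne => hD.disjoint_of_not_adj hne (hJ x hx y hy),
    sum_congr rfl fun x _ => hD.2.1 x.1 x.2, sum_const, smul_eq_mul]

theorem card_mul_eq_of_isMaxIndep (hD : IsSteiner v k B)
    (hPC : ∃ P : Finset (Finset α), IsParallelClass B P) {I : Finset {b // b ∈ B}}
    (hI : IsMaxIndep (BIG 1 B) I) : #I * k = v := by
  obtain ⟨P, hPB, hPdisj, hPcov⟩ := hPC
  have hJ : ∀ a ∈ P.subtype (· ∈ B), ∀ b ∈ P.subtype (· ∈ B), ¬ (BIG 1 B).Adj a b := by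
    rintro a ha b hb ⟨hne, h₁⟩
    rw [mem_subtype] at ha hb
    rw [hPdisj _ ha _ hb (Subtype.coe_ne_coe.2 hne), card_empty] at h₁
    exact zero_ne_one h₁
  have hPv : #(P.subtype (· ∈ B)) * k = v := by
    rw [← hD.card_biUnion_of_indep hJ, ← hD.1, ← card_univ]
    congr 1
    refine eq_univ_of_forall fun p => ?_
    obtain ⟨b, hb, hpb⟩ := hPcov p
    exact mem_biUnion.2 ⟨⟨b, hPB hb⟩, mem_subtype.2 hb, hpb⟩
  have hIv : #I * k ≤ v := by
    rw [← hD.card_biUnion_of_indep hI.1, ← hD.1]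
    exact card_le_univ _
  have := Nat.mul_le_mul_right k (hI.2 _ hJ)
  omega

theorem card_filter_mem_eq_one_of_isMaxIndep (hD : IsSteiner v k B)
    (hPC : ∃ P : Finset (Finset α), IsParallelClass B P) {I : Finset {b // b ∈ B}}
    (hI : IsMaxIndep (BIG 1 B) I) (p : α) : #(I.filter (p ∈ ·.1)) = 1 := by
  have hcov : I.biUnion Subtype.val = univ := eq_univ_of_card _ <| by
    rw [hD.card_biUnion_of_indep hI.1, hD.card_mul_eq_of_isMaxIndep hPC hI, hD.1]
  obtain ⟨x, hx, hpx⟩ := mem_biUnion.1 (hcov ▸ mem_univ p)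
  rw [card_eq_one_iff_existsUnique]
  refine ⟨x, mem_filter.2 ⟨hx, hpx⟩, fun y hy => ?_⟩
  replace hy := mem_filter.1 hy
  by_contra hne
  exact disjoint_left.1 (hD.disjoint_of_not_adj hne (hI.1 y hy.1 x hx)) hy.2 hpx

theorem card_filter_adj_of_isMaxIndep (hD : IsSteiner v k B)
    (hPC : ∃ P : Finset (Finset α), IsParallelClass B P) {I : Finset {b // b ∈ B}}
    (hI : IsMaxIndep (BIG 1 B) I) {z : {b // b ∈ B}} (hz : z ∉ I) :
    #(I.filter ((BIG 1 B).Adj z)) = k := by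
  have hne : ∀ x ∈ I, z ≠ x := fun x hx h => hz (h ▸ hx)
  rw [← hD.2.1 z.1 z.2, ← card_filter_card_inter_eq_one I Subtype.val z.1
    (fun p _ => hD.card_filter_mem_eq_one_of_isMaxIndep hPC hI p)
    (fun x hx => hD.card_inter_le_one z.2 x.2 (Subtype.coe_ne_coe.2 (hne x hx)))]
  congr 1
  exact filter_congr fun x hx => ⟨fun h => h.2, fun h => ⟨hne x hx, h⟩⟩

end IsSteiner

/-- If an `S(2,k,v)` has a parallel class and its 1-block intersection graph
(which is `k(v-k)/(k-1)`-regular) is silver, then `k² ∣ v`. -/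
theorem stmt3 [Fintype α] [DecidableEq α] (v k : ℕ) (B : Finset (Finset α))
    (hk : 2 < k) (hkv : k < v) (hD : IsSteiner v k B)
    (hPC : ∃ P : Finset (Finset α), IsParallelClass B P)
    (hsilver : IsSilver (BIG 1 B) (k * (v - k) / (k - 1))) :
    k ^ 2 ∣ v := by
  obtain ⟨I, hI, hsilver⟩ := hsilver
  have hIv := hD.card_mul_eq_of_isMaxIndep hPC hI
  have hIr : #I ≤ k * (v - k) / (k - 1) := by
    rw [← hIv]
    exact le_mul_sub_div_sub_one (Nat.lt_of_mul_lt_mul_right (a := k) (by omega)) (by omega)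
  obtain ⟨m, hm⟩ := hsilver.dvd_card (hD.isRegularOfDegree_BIG (by omega)) hI.1
    (fun z hz => hD.card_filter_adj_of_isMaxIndep hPC hI hz) hIr
  exact ⟨m, by rw [← hIv, hm]; ring⟩
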